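/- arXiv:0803.3121 — 2 statements merged into one kernel-verified Lean document; each statement's English description precedes it below -/
import Mathlib

section
/- (Theorem 3, flavor-diagonal case) Let N ≥ 1, and for each triple (a,b,c) of flavors in Fin N let C^{abc} : ℤ × ℤ → ℂ, and for each flavor a let D^a : ℤ → ℂ. Suppose: (i) there exist K > 0 and r > 0 with |C^{abc}(k,l)| ≤ K·exp(−r(|k|+|l|)) and |D^a(m)| ≤ K·exp(−r|m|) for all flavors and all k, l, m ∈ ℤ (locality); (ii) for every flavor a there exist flavors b, c such that C^{abc} is not identically zero; (iii) Σ_{m∈ℤ} D^a(m) = 0 for every flavor a; (iv) the flavor-diagonal Leibniz rule holds: for all flavors a, b, c and all l, m, n ∈ ℤ, Σ_{k∈ℤ} C^{abc}(l−k, m−k) D^c(k−n) = Σ_{k∈ℤ} C^{abc}(k−n, m−n) D^a(l−k) + Σ_{k∈ℤ} C^{abc}(l−n, k−n) D^b(m−k). Then D^a(m) = 0 for all flavors a and all m ∈ ℤ. -/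
open Complex Real MeasureTheory
open scoped ENNReal NNReal
noncomputable def ee (m : ℤ) (θ : ℝ) : ℂ := Complex.exp ((m * θ : ℝ) * Complex.I)
lemma ee_norm (m : ℤ) (θ : ℝ) : ‖ee m θ‖ = 1 := by simp [ee, Complex.norm_exp]
lemma ee_cont (m : ℤ) : Continuous (fun θ : ℝ => ee m θ) := by
  unfold ee; fun_prop

lemma ee_integral (n : ℤ) :
    ∫ θ in Set.Ioc (0:ℝ) (2*π), ee n θ = if n = 0 then (2*π:ℂ) else 0 := by
  have h2π : (0:ℝ) ≤ 2*π := by positivity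
  rw [← intervalIntegral.integral_of_le h2π]
  by_cases hn : n = 0
  · simp [hn, ee]
  · have hfun : ∀ θ : ℝ, ee n θ = Complex.exp ((n * Complex.I) * θ) := by
      intro θ; rw [ee]; congr 1; push_cast; ring
    simp only [hfun, if_neg hn]
    rw [integral_exp_mul_complex (by simp [hn, Complex.I_ne_zero])]
    have : (n:ℂ) * Complex.I * ((2*π:ℝ):ℂ) = n * (2 * (π:ℂ) * Complex.I) := by push_cast; ring
    rw [this, Complex.exp_int_mul_two_pi_mul_I]
    simp

lemma ee_mul (m k : ℤ) (θ : ℝ) : ee m θ * ee k θ = ee (m + k) θ := by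
  rw [ee, ee, ee, ← Complex.exp_add]; congr 1; push_cast; ring

lemma ee_add (m : ℤ) (θ φ : ℝ) : ee m (θ + φ) = ee m θ * ee m φ := by
  rw [ee, ee, ee, ← Complex.exp_add]; congr 1; push_cast; ring

lemma ee_zero (m : ℤ) : ee m 0 = 1 := by simp [ee]

lemma ee_periodic (m : ℤ) (θ : ℝ) : ee m (θ + 2 * π) = ee m θ := by
  rw [ee_add]
  have h1 : ee m (2 * π) = 1 := by
    rw [ee]
    have h2 : ((m * (2 * π) : ℝ) : ℂ) * Complex.I = m * (2 * (π : ℂ) * Complex.I) := by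
      push_cast; ring
    rw [h2, Complex.exp_int_mul_two_pi_mul_I]
  rw [h1, mul_one]

lemma sumexp {s : ℝ} (hs : 0 < s) : Summable (fun m : ℤ => Real.exp (-s * |m|)) := by
  have hgeo : Summable (fun n : ℕ => Real.exp (-s) ^ n) :=
    summable_geometric_of_lt_one (by positivity) (Real.exp_lt_one_iff.2 (by linarith))
  have key : ∀ n : ℕ, Real.exp (-s) ^ n = Real.exp (-s * n) := by
    intro n; rw [← Real.exp_nat_mul]; ring_nf
  apply Summable.of_nat_of_neg
  · apply hgeo.congr; intro n; rw [key]; norm_num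
  · apply hgeo.congr; intro n; rw [key]; rw [abs_neg]; norm_num

lemma coeff_zero {r : ℝ} (hr : 0 < r) (g : ℤ → ℂ) (A : ℝ)
    (hg : ∀ m : ℤ, ‖g m‖ ≤ A * Real.exp (-r * |m|))
    (h0 : ∀ θ : ℝ, ∑' m : ℤ, g m * ee m θ = 0) : ∀ m : ℤ, g m = 0 := by
  intro m₀
  have hπ : (0:ℝ) < 2*π := by positivity
  have hgsum : Summable (fun m : ℤ => ‖g m‖) :=
    Summable.of_nonneg_of_le (fun m => norm_nonneg _) hg ((sumexp hr).mul_left A)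
  -- the integrand family
  set f : ℤ → ℝ → ℂ := fun m θ => g m * ee (m - m₀) θ with hf
  have hmeas : ∀ m : ℤ, AEStronglyMeasurable (f m)
      (volume.restrict (Set.Ioc (0:ℝ) (2*π))) := fun m =>
    (continuous_const.mul (ee_cont (m - m₀))).aestronglyMeasurable
  have hnorm : ∀ m θ, ‖f m θ‖ = ‖g m‖ := by
    intro m θ; rw [hf]; simp only [norm_mul, ee_norm, mul_one]
  have hlint : ∑' m : ℤ, ∫⁻ θ, ‖f m θ‖₊ ∂(volume.restrict (Set.Ioc (0:ℝ) (2*π))) ≠ ⊤ := by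
    have heq : ∀ m : ℤ, ∫⁻ θ, ‖f m θ‖₊ ∂(volume.restrict (Set.Ioc (0:ℝ) (2*π)))
        = (‖g m‖₊ : ℝ≥0∞) * ENNReal.ofReal (2*π) := by
      intro m
      have : (fun θ : ℝ => (‖f m θ‖₊ : ℝ≥0∞)) = fun _ => (‖g m‖₊ : ℝ≥0∞) := by
        funext θ
        congr 1
        ext
        exact hnorm m θ
      rw [this, MeasureTheory.lintegral_const]
      simp [Real.volume_Ioc, hπ.le]
    rw [tsum_congr heq, ENNReal.tsum_mul_right]
    apply ENNReal.mul_ne_top _ (by exact ENNReal.ofReal_ne_top)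
    rw [ENNReal.tsum_coe_ne_top_iff_summable]
    rw [← NNReal.summable_coe]
    exact hgsum.congr (fun m => rfl)
  have hswap := MeasureTheory.integral_tsum hmeas hlint
  -- LHS is zero
  have hL : ∀ θ : ℝ, ∑' m : ℤ, f m θ = 0 := by
    intro θ
    have : ∀ m : ℤ, f m θ = (g m * ee m θ) * ee (-m₀) θ := by
      intro m; rw [hf]; simp only [mul_assoc]; rw [ee_mul]; ring_nf
    rw [tsum_congr this, tsum_mul_right, h0, zero_mul]
  rw [MeasureTheory.integral_congr_ae (Filter.Eventually.of_forall hL)] at hswap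
  simp only [integral_zero] at hswap
  -- RHS computes to g m₀ * 2π
  have hR : ∀ m : ℤ, ∫ θ, f m θ ∂(volume.restrict (Set.Ioc (0:ℝ) (2*π)))
      = g m * (if m - m₀ = 0 then (2*π:ℂ) else 0) := by
    intro m
    rw [hf]
    simp only
    rw [MeasureTheory.integral_const_mul, ee_integral]
  rw [tsum_congr hR] at hswap
  have := tsum_eq_single (L := SummationFilter.unconditional ℤ) (f := fun m : ℤ => g m * (if m - m₀ = 0 then (2*π:ℂ) else 0)) m₀ ?_
  · rw [this] at hswap
    simp only [sub_self, if_pos rfl] at hswap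
    have h2 : ((2:ℂ)*(π:ℂ)) ≠ 0 := by
      simp only [ne_eq, mul_eq_zero, Complex.ofReal_eq_zero, not_or]
      constructor
      · norm_num
      · exact Real.pi_ne_zero
    rcases mul_eq_zero.mp hswap.symm with h | h
    · exact h
    · exact absurd h h2
  · intro m hm
    have : ¬ (m - m₀ = 0) := by omega
    simp [this]

lemma dense_ne {r : ℝ} (hr : 0 < r) (g : ℤ → ℂ) (A : ℝ)
    (hg : ∀ m : ℤ, ‖g m‖ ≤ A * Real.exp (-r * |m|))
    (θ₀ : ℝ) (hne : ∑' k : ℤ, g k * ee k θ₀ ≠ 0) :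
    Dense {θ : ℝ | ∑' k : ℤ, g k * ee k θ ≠ 0} := by
  -- complex extension
  set H : ℂ → ℂ := fun z => ∑' k : ℤ, g k * Complex.exp ((k : ℂ) * z * Complex.I) with hH
  have hreal : ∀ θ : ℝ, H θ = ∑' k : ℤ, g k * ee k θ := by
    intro θ
    apply tsum_congr
    intro k
    rw [ee]
    congr 2
    push_cast
    ring
  set U : Set ℂ := Complex.im ⁻¹' Set.Ioo (-(r/2)) (r/2) with hU
  have hUopen : IsOpen U := isOpen_Ioo.preimage Complex.continuous_im
  have hUconn : IsPreconnected U := by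
    have hconv : Convex ℝ U := (convex_Ioo (-(r/2)) (r/2)).linear_preimage Complex.imLm
    exact hconv.isPreconnected
  have hmemreal : ∀ θ : ℝ, (θ : ℂ) ∈ U := by
    intro θ
    simp only [hU, Set.mem_preimage, Complex.ofReal_im, Set.mem_Ioo]
    constructor <;> [linarith; linarith]
  -- bound on U
  have hbound : ∀ (k : ℤ) (z : ℂ), z ∈ U →
      ‖g k * Complex.exp ((k : ℂ) * z * Complex.I)‖ ≤ (|A|) * Real.exp (-(r/2) * |k|) := by
    intro k z hz
    simp only [hU, Set.mem_preimage, Set.mem_Ioo] at hz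
    rw [norm_mul, Complex.norm_exp]
    have hre : ((k : ℂ) * z * Complex.I).re = -(k : ℝ) * z.im := by
      simp [Complex.mul_re, Complex.mul_im]
    rw [hre]
    have h1 : ‖g k‖ ≤ |A| * Real.exp (-r * |k|) := by
      refine (hg k).trans (mul_le_mul_of_nonneg_right (le_abs_self A) (Real.exp_nonneg _))
    have h2 : Real.exp (-(k:ℝ) * z.im) ≤ Real.exp (|(k:ℝ)| * (r/2)) := by
      apply Real.exp_le_exp.2
      calc -(k:ℝ) * z.im ≤ |(-(k:ℝ)) * z.im| := le_abs_self _
        _ = |(k:ℝ)| * |z.im| := by rw [abs_mul, abs_neg]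
        _ ≤ |(k:ℝ)| * (r/2) := by
            exact mul_le_mul_of_nonneg_left (le_of_lt (abs_lt.2 hz)) (abs_nonneg _)
    calc ‖g k‖ * Real.exp (-(k:ℝ) * z.im)
        ≤ (|A| * Real.exp (-r * |k|)) * Real.exp (|(k:ℝ)| * (r/2)) := by
          apply mul_le_mul h1 h2 (Real.exp_nonneg _) (by positivity)
      _ = |A| * Real.exp (-(r/2) * |k|) := by
          rw [mul_assoc, ← Real.exp_add]
          congr 2
          push_cast
          ring
  have hdiff : DifferentiableOn ℂ H U := by
    apply differentiableOn_tsum_of_summable_norm ((sumexp (by linarith : (0:ℝ) < r/2)).mul_left |A|)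
      (fun k => ((differentiable_const (g k)).mul (((differentiable_id.const_mul _).mul_const _).cexp)).differentiableOn)
      hUopen hbound
  have hanal : AnalyticOnNhd ℂ H U := hdiff.analyticOnNhd hUopen
  -- density
  rw [dense_iff_inter_open]
  rintro V hV ⟨x, hxV⟩
  by_contra hcon
  push_neg at hcon
  have hzero : ∀ θ ∈ V, ∑' k : ℤ, g k * ee k θ = 0 := by
    intro θ hθ
    by_contra h
    have hmem : θ ∈ V ∩ {θ : ℝ | ∑' k : ℤ, g k * ee k θ ≠ 0} := ⟨hθ, h⟩
    rw [hcon] at hmem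
    exact hmem
  obtain ⟨ε, hε, hball⟩ := Metric.isOpen_iff.1 hV x hxV
  -- frequent zeros of H near (x : ℂ)
  have hfreq : ∃ᶠ z in nhdsWithin (x : ℂ) {(x:ℂ)}ᶜ, H z = 0 := by
    have hseq : Filter.Tendsto (fun n : ℕ => ((x + ε / (n + 2) : ℝ) : ℂ)) Filter.atTop
        (nhdsWithin (x:ℂ) {(x:ℂ)}ᶜ) := by
      apply tendsto_nhdsWithin_of_tendsto_nhds_of_eventually_within
      · have : Filter.Tendsto (fun n : ℕ => (x + ε / (n + 2) : ℝ)) Filter.atTop (nhds x) := by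
          have : Filter.Tendsto (fun n : ℕ => ε / (n + 2 : ℝ)) Filter.atTop (nhds 0) := by
            apply Filter.Tendsto.div_atTop tendsto_const_nhds
            exact Filter.tendsto_atTop_add_const_right _ 2 tendsto_natCast_atTop_atTop
          simpa using tendsto_const_nhds.add this
        exact (Complex.continuous_ofReal.tendsto x).comp this
      · apply Filter.Eventually.of_forall
        intro n
        simp only [Set.mem_compl_iff, Set.mem_singleton_iff]
        intro h
        have : (x + ε / (n + 2) : ℝ) = x := by exact_mod_cast h
        have hpos : (0:ℝ) < ε / (n + 2) := by positivity
        linarith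
    apply hseq.frequently
    apply Filter.Frequently.of_forall
    intro n
    rw [hreal]
    apply hzero
    apply hball
    simp only [Metric.mem_ball, Real.dist_eq]
    have hpos : (0:ℝ) < ε / (n + 2) := by positivity
    have hlt : ε / (n + 2) < ε := by
      rw [div_lt_iff₀ (by positivity)]
      nlinarith
    rw [abs_of_pos] <;> [skip; linarith]
    linarith [abs_of_pos hpos]
  have := hanal.eqOn_zero_of_preconnected_of_frequently_eq_zero hUconn (hmemreal x) hfreq
  have hzθ₀ : H θ₀ = 0 := this (hmemreal θ₀)
  rw [hreal] at hzθ₀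
  exact hne hzθ₀

lemma sum_pair {r K : ℝ} (hr : 0 < r) :
    Summable (fun p : ℤ × ℤ => K * (Real.exp (-r * |p.1|) * Real.exp (-r * |p.2|))) :=
  (Summable.mul_of_nonneg (sumexp hr) (sumexp hr)
    (fun _ => Real.exp_nonneg _) (fun _ => Real.exp_nonneg _)).mul_left K

set_option maxHeartbeats 1000000 in
lemma tsum_shear {K r : ℝ} (hr : 0 < r) (Cf : ℤ × ℤ → ℂ) (d : ℤ → ℂ)
    (hCb : ∀ p : ℤ × ℤ, ‖Cf p‖ ≤ K * (Real.exp (-r * |p.1|) * Real.exp (-r * |p.2|)))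
    (hdb : ∀ m : ℤ, ‖d m‖ ≤ K * Real.exp (-r * |m|))
    (θ φ ψ : ℝ) (G : (ℤ × ℤ) × ℤ → ℂ) (σ : (ℤ × ℤ) × ℤ ≃ (ℤ × ℤ) × ℤ)
    (hGσ : ∀ z : (ℤ × ℤ) × ℤ, G (σ z) =
      (Cf z.1 * (ee z.1.1 θ * ee z.1.2 φ)) * (d z.2 * ee z.2 ψ)) :
    (∑' q : ℤ × ℤ, ∑' k : ℤ, G (q, k)) =
      (∑' p : ℤ × ℤ, Cf p * (ee p.1 θ * ee p.2 φ)) * (∑' m : ℤ, d m * ee m ψ)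
    ∧ Summable G := by
  have hK0 : 0 ≤ K := le_trans (norm_nonneg (d 0)) ((hdb 0).trans_eq (by simp))
  have hsC : Summable (fun p : ℤ × ℤ => ‖Cf p * (ee p.1 θ * ee p.2 φ)‖) := by
    apply Summable.of_nonneg_of_le (fun _ => norm_nonneg _) _ (sum_pair (K := K) hr)
    intro p
    rw [norm_mul, norm_mul, ee_norm, ee_norm, mul_one, mul_one]
    exact hCb p
  have hsd : Summable (fun m : ℤ => ‖d m * ee m ψ‖) := by
    apply Summable.of_nonneg_of_le (fun _ => norm_nonneg _) _ ((sumexp hr).mul_left K)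
    intro m
    rw [norm_mul, ee_norm, mul_one]
    exact hdb m
  have hGσs : Summable (G ∘ σ) := by
    apply Summable.of_norm_bounded
      (g := fun z : (ℤ × ℤ) × ℤ =>
        (K * (Real.exp (-r * |z.1.1|) * Real.exp (-r * |z.1.2|))) * (K * Real.exp (-r * |z.2|)))
    · exact Summable.mul_of_nonneg (sum_pair (K := K) hr) ((sumexp hr).mul_left K)
        (fun p => by positivity) (fun m => by positivity)
    · intro z
      simp only [Function.comp_apply, hGσ z, norm_mul, ee_norm, mul_one]
      apply mul_le_mul
      · exact hCb z.1
      · exact hdb z.2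
      · positivity
      · positivity
  have hG : Summable G := σ.summable_iff.mp hGσs
  constructor
  · calc ∑' q : ℤ × ℤ, ∑' k : ℤ, G (q, k) = ∑' z : (ℤ × ℤ) × ℤ, G z := (Summable.tsum_prod' hG (fun q => hG.prod_factor q)).symm
      _ = ∑' z : (ℤ × ℤ) × ℤ, G (σ z) := (σ.tsum_eq G).symm
      _ = ∑' z : (ℤ × ℤ) × ℤ,
          (Cf z.1 * (ee z.1.1 θ * ee z.1.2 φ)) * (d z.2 * ee z.2 ψ) := tsum_congr hGσ
      _ = (∑' p : ℤ × ℤ, Cf p * (ee p.1 θ * ee p.2 φ)) * (∑' m : ℤ, d m * ee m ψ) :=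
          (tsum_mul_tsum_of_summable_norm hsC hsd).symm
  · exact hG

def shear1 : (ℤ × ℤ) × ℤ ≃ (ℤ × ℤ) × ℤ where
  toFun z := ((z.1.1 + z.2, z.1.2 + z.2), z.2)
  invFun z := ((z.1.1 - z.2, z.1.2 - z.2), z.2)
  left_inv z := by simp [Prod.ext_iff]
  right_inv z := by simp [Prod.ext_iff]

def shear2 : (ℤ × ℤ) × ℤ ≃ (ℤ × ℤ) × ℤ where
  toFun z := ((z.1.1 + z.2, z.1.2), z.1.1)
  invFun z := ((z.2, z.1.2), z.1.1 - z.2)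
  left_inv z := by simp [Prod.ext_iff]
  right_inv z := by simp [Prod.ext_iff]

def shear3 : (ℤ × ℤ) × ℤ ≃ (ℤ × ℤ) × ℤ where
  toFun z := ((z.1.1, z.1.2 + z.2), z.1.2)
  invFun z := ((z.1.1, z.2), z.1.2 - z.2)
  left_inv z := by simp [Prod.ext_iff]
  right_inv z := by simp [Prod.ext_iff]

set_option maxHeartbeats 1000000 in
lemma leibniz_fourier {K r : ℝ} (hr : 0 < r)
    (Cf : ℤ × ℤ → ℂ) (Da Db Dc : ℤ → ℂ)
    (hCb : ∀ p : ℤ × ℤ, ‖Cf p‖ ≤ K * (Real.exp (-r * |p.1|) * Real.exp (-r * |p.2|)))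
    (hDa : ∀ m : ℤ, ‖Da m‖ ≤ K * Real.exp (-r * |m|))
    (hDb : ∀ m : ℤ, ‖Db m‖ ≤ K * Real.exp (-r * |m|))
    (hDc : ∀ m : ℤ, ‖Dc m‖ ≤ K * Real.exp (-r * |m|))
    (hlb : ∀ l m : ℤ,
      ∑' k : ℤ, Cf (l - k, m - k) * Dc k =
        (∑' k : ℤ, Cf (k, m) * Da (l - k)) + ∑' k : ℤ, Cf (l, k) * Db (m - k))
    (θ φ : ℝ) :
    (∑' p : ℤ × ℤ, Cf p * (ee p.1 θ * ee p.2 φ)) *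
      ((∑' m : ℤ, Dc m * ee m (θ + φ)) - (∑' m : ℤ, Da m * ee m θ) -
        (∑' m : ℤ, Db m * ee m φ)) = 0 := by
  set G1 : (ℤ × ℤ) × ℤ → ℂ := fun z =>
    Cf (z.1.1 - z.2, z.1.2 - z.2) * Dc z.2 * (ee z.1.1 θ * ee z.1.2 φ) with hG1
  set G2 : (ℤ × ℤ) × ℤ → ℂ := fun z =>
    Cf (z.2, z.1.2) * Da (z.1.1 - z.2) * (ee z.1.1 θ * ee z.1.2 φ) with hG2
  set G3 : (ℤ × ℤ) × ℤ → ℂ := fun z =>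
    Cf (z.1.1, z.2) * Db (z.1.2 - z.2) * (ee z.1.1 θ * ee z.1.2 φ) with hG3
  have hc1 := tsum_shear hr Cf Dc hCb hDc θ φ (θ + φ) G1 shear1 (by
    intro z
    show Cf (z.1.1 + z.2 - z.2, z.1.2 + z.2 - z.2) * Dc z.2 *
      (ee (z.1.1 + z.2) θ * ee (z.1.2 + z.2) φ) = _
    rw [add_sub_cancel_right, add_sub_cancel_right, ← ee_mul z.1.1 z.2 θ,
      ← ee_mul z.1.2 z.2 φ, ee_add]
    ring)
  have hc2 := tsum_shear hr Cf Da hCb hDa θ φ θ G2 shear2 (by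
    intro z
    show Cf (z.1.1, z.1.2) * Da (z.1.1 + z.2 - z.1.1) * (ee (z.1.1 + z.2) θ * ee z.1.2 φ) = _
    rw [add_sub_cancel_left, ← ee_mul z.1.1 z.2 θ]
    ring)
  have hc3 := tsum_shear hr Cf Db hCb hDb θ φ φ G3 shear3 (by
    intro z
    show Cf (z.1.1, z.1.2) * Db (z.1.2 + z.2 - z.1.2) * (ee z.1.1 θ * ee (z.1.2 + z.2) φ) = _
    rw [add_sub_cancel_left, ← ee_mul z.1.2 z.2 φ]
    ring)
  -- fiberwise sums
  have hE2 : Summable (fun q : ℤ × ℤ => ∑' k : ℤ, G2 (q, k)) :=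
    (hc2.2.hasSum.prod_fiberwise (fun q => (hc2.2.prod_factor q).hasSum)).summable
  have hE3 : Summable (fun q : ℤ × ℤ => ∑' k : ℤ, G3 (q, k)) :=
    (hc3.2.hasSum.prod_fiberwise (fun q => (hc3.2.prod_factor q).hasSum)).summable
  have hpt : ∀ q : ℤ × ℤ, (∑' k : ℤ, G1 (q, k)) =
      (∑' k : ℤ, G2 (q, k)) + ∑' k : ℤ, G3 (q, k) := by
    intro q
    have e1 : (∑' k : ℤ, G1 (q, k)) =
        (∑' k : ℤ, Cf (q.1 - k, q.2 - k) * Dc k) * (ee q.1 θ * ee q.2 φ) := by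
      rw [← tsum_mul_right]
    have e2 : (∑' k : ℤ, G2 (q, k)) =
        (∑' k : ℤ, Cf (k, q.2) * Da (q.1 - k)) * (ee q.1 θ * ee q.2 φ) := by
      rw [← tsum_mul_right]
    have e3 : (∑' k : ℤ, G3 (q, k)) =
        (∑' k : ℤ, Cf (q.1, k) * Db (q.2 - k)) * (ee q.1 θ * ee q.2 φ) := by
      rw [← tsum_mul_right]
    rw [e1, e2, e3, hlb q.1 q.2, add_mul]
  have hmain : (∑' p : ℤ × ℤ, Cf p * (ee p.1 θ * ee p.2 φ)) * (∑' m : ℤ, Dc m * ee m (θ + φ))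
      = (∑' p : ℤ × ℤ, Cf p * (ee p.1 θ * ee p.2 φ)) * (∑' m : ℤ, Da m * ee m θ)
      + (∑' p : ℤ × ℤ, Cf p * (ee p.1 θ * ee p.2 φ)) * (∑' m : ℤ, Db m * ee m φ) := by
    rw [← hc1.1, ← hc2.1, ← hc3.1, tsum_congr hpt, Summable.tsum_add hE2 hE3]
  linear_combination hmain


set_option maxHeartbeats 1000000

/-- Theorem 3, flavor-diagonal case: In a lattice theory with
finitely many flavors in infinite volume, a local translation-invariant
flavor-diagonal difference operator satisfying the Leibniz rule with a
(flavor-wise) nontrivial local translation-invariant product rule must vanish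
identically. -/
theorem stmt_14 (N : ℕ) (hN : 1 ≤ N)
    (C : Fin N → Fin N → Fin N → ℤ × ℤ → ℂ) (D : Fin N → ℤ → ℂ)
    (K r : ℝ) (hK : 0 < K) (hr : 0 < r)
    (hC : ∀ a b c : Fin N, ∀ k l : ℤ,
      ‖C a b c (k, l)‖ ≤ K * Real.exp (-r * ((|k| : ℝ) + (|l| : ℝ))))
    (hD : ∀ a : Fin N, ∀ m : ℤ,
      ‖D a m‖ ≤ K * Real.exp (-r * (|m| : ℝ)))
    (hne : ∀ a : Fin N, ∃ b c : Fin N, ∃ k l : ℤ, C a b c (k, l) ≠ 0)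
    (hzero : ∀ a : Fin N, ∑' m : ℤ, D a m = 0)
    (hleib : ∀ a b c : Fin N, ∀ l m n : ℤ,
      ∑' k : ℤ, C a b c (l - k, m - k) * D c (k - n) =
        (∑' k : ℤ, C a b c (k - n, m - n) * D a (l - k)) +
          ∑' k : ℤ, C a b c (l - n, k - n) * D b (m - k)) :
    ∀ a : Fin N, ∀ m : ℤ, D a m = 0 := by
  intro a
  obtain ⟨b, c, k₀, l₀, hC0⟩ := hne a
  set Cf : ℤ × ℤ → ℂ := C a b c with hCf
  have hCb : ∀ p : ℤ × ℤ, ‖Cf p‖ ≤ K * (Real.exp (-r * |p.1|) * Real.exp (-r * |p.2|)) := by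
    intro p
    have h1 := hC a b c p.1 p.2
    rw [hCf]
    rw [show ((p.1, p.2) : ℤ × ℤ) = p from rfl] at h1
    refine h1.trans (le_of_eq ?_)
    rw [← Real.exp_add]
    congr 1
    push_cast
    ring
  have hDb : ∀ x : Fin N, ∀ m : ℤ, ‖D x m‖ ≤ K * Real.exp (-r * |m|) := by
    intro x m
    rw [Int.cast_abs]
    exact hD x m
  -- the Fourier transforms
  set F : Fin N → ℝ → ℂ := fun x θ => ∑' m : ℤ, D x m * ee m θ with hFdef
  have hFcont : ∀ x : Fin N, Continuous (F x) := by
    intro x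
    apply continuous_tsum (fun m => continuous_const.mul (ee_cont m)) ((sumexp hr).mul_left K)
    intro m θ
    show ‖D x m * ee m θ‖ ≤ _
    rw [norm_mul, ee_norm, mul_one]
    exact hDb x m
  have hF0 : ∀ x : Fin N, F x 0 = 0 := by
    intro x
    rw [hFdef]
    simp only
    rw [tsum_congr (fun m => by rw [ee_zero, mul_one] : ∀ m : ℤ, D x m * ee m 0 = D x m)]
    exact hzero x
  set Chat : ℝ → ℝ → ℂ := fun θ φ => ∑' p : ℤ × ℤ, Cf p * (ee p.1 θ * ee p.2 φ) with hChat
  have hlb : ∀ l m : ℤ,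
      ∑' k : ℤ, Cf (l - k, m - k) * D c k =
        (∑' k : ℤ, Cf (k, m) * D a (l - k)) + ∑' k : ℤ, Cf (l, k) * D b (m - k) := by
    intro l m
    have := hleib a b c l m 0
    simpa only [sub_zero] using this
  have key : ∀ θ φ : ℝ, Chat θ φ * (F c (θ + φ) - F a θ - F b φ) = 0 := fun θ φ =>
    leibniz_fourier hr Cf (D a) (D b) (D c) hCb (hDb a) (hDb b) (hDb c) hlb θ φ
  -- row and column representations of Chat
  set T : ℝ := ∑' l : ℤ, Real.exp (-r * |l|) with hT
  have hsmall : ∀ k : ℤ, ∀ θ : ℝ, Summable (fun l : ℤ => ‖Cf (k, l) * ee l θ‖) := by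
    intro k θ
    apply Summable.of_nonneg_of_le (fun _ => norm_nonneg _) _ ((sumexp hr).mul_left (K * Real.exp (-r * |k|)))
    intro l
    rw [norm_mul, ee_norm, mul_one]
    exact (hCb (k, l)).trans (le_of_eq (by ring))
  have hsC : ∀ θ φ : ℝ, Summable (fun p : ℤ × ℤ => Cf p * (ee p.1 θ * ee p.2 φ)) := by
    intro θ φ
    apply Summable.of_norm_bounded (sum_pair (K := K) hr)
    intro p
    rw [norm_mul, norm_mul, ee_norm, ee_norm, mul_one, mul_one]
    exact hCb p
  have hrows : ∀ θ φ : ℝ, Chat θ φ = ∑' k : ℤ, (∑' l : ℤ, Cf (k, l) * ee l φ) * ee k θ := by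
    intro θ φ
    rw [hChat]
    simp only
    rw [Summable.tsum_prod' (hsC θ φ) (fun k => (hsC θ φ).prod_factor k)]
    apply tsum_congr
    intro k
    rw [← tsum_mul_right]
    apply tsum_congr
    intro l
    ring
  have hcols : ∀ θ φ : ℝ, Chat θ φ = ∑' l : ℤ, (∑' k : ℤ, Cf (k, l) * ee k θ) * ee l φ := by
    intro θ φ
    rw [hChat]
    simp only
    have hswap := (Equiv.prodComm ℤ ℤ).tsum_eq (fun p : ℤ × ℤ => Cf p * (ee p.1 θ * ee p.2 φ))
    rw [← hswap]
    have hs2 : Summable (fun p : ℤ × ℤ =>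
        Cf (p.2, p.1) * (ee p.2 θ * ee p.1 φ)) := (hsC θ φ).prod_symm
    rw [show (fun p : ℤ × ℤ => Cf ((Equiv.prodComm ℤ ℤ) p) *
        (ee ((Equiv.prodComm ℤ ℤ) p).1 θ * ee ((Equiv.prodComm ℤ ℤ) p).2 φ)) =
        (fun p : ℤ × ℤ => Cf (p.2, p.1) * (ee p.2 θ * ee p.1 φ)) from rfl]
    rw [Summable.tsum_prod' hs2 (fun l => hs2.prod_factor l)]
    apply tsum_congr
    intro l
    rw [← tsum_mul_right]
    apply tsum_congr
    intro k
    ring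
  have hrowb : ∀ φ : ℝ, ∀ k : ℤ, ‖∑' l : ℤ, Cf (k, l) * ee l φ‖ ≤ (K * T) * Real.exp (-r * |k|) := by
    intro φ k
    calc ‖∑' l : ℤ, Cf (k, l) * ee l φ‖ ≤ ∑' l : ℤ, ‖Cf (k, l) * ee l φ‖ :=
          norm_tsum_le_tsum_norm (hsmall k φ)
      _ ≤ ∑' l : ℤ, (K * Real.exp (-r * |k|)) * Real.exp (-r * |l|) := by
          apply Summable.tsum_le_tsum _ (hsmall k φ) ((sumexp hr).mul_left _)
          intro l
          rw [norm_mul, ee_norm, mul_one]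
          exact (hCb (k, l)).trans (le_of_eq (by ring))
      _ = (K * T) * Real.exp (-r * |k|) := by
          rw [tsum_mul_left, hT]
          ring
  have hcolb : ∀ θ : ℝ, ∀ l : ℤ, ‖∑' k : ℤ, Cf (k, l) * ee k θ‖ ≤ (K * T) * Real.exp (-r * |l|) := by
    intro θ l
    have hsm : Summable (fun k : ℤ => ‖Cf (k, l) * ee k θ‖) := by
      apply Summable.of_nonneg_of_le (fun _ => norm_nonneg _) _ ((sumexp hr).mul_left (K * Real.exp (-r * |l|)))
      intro k
      rw [norm_mul, ee_norm, mul_one]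
      exact (hCb (k, l)).trans (le_of_eq (by ring))
    calc ‖∑' k : ℤ, Cf (k, l) * ee k θ‖ ≤ ∑' k : ℤ, ‖Cf (k, l) * ee k θ‖ :=
          norm_tsum_le_tsum_norm hsm
      _ ≤ ∑' k : ℤ, (K * Real.exp (-r * |l|)) * Real.exp (-r * |k|) := by
          apply Summable.tsum_le_tsum _ hsm ((sumexp hr).mul_left _)
          intro k
          rw [norm_mul, ee_norm, mul_one]
          exact (hCb (k, l)).trans (le_of_eq (by ring))
      _ = (K * T) * Real.exp (-r * |l|) := by
          rw [tsum_mul_left, hT]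
          ring
  -- Chat is nonzero somewhere
  have hex : ∃ θ₀ φ₀ : ℝ, Chat θ₀ φ₀ ≠ 0 := by
    by_contra hcon
    push_neg at hcon
    have h1 : ∀ φ : ℝ, ∀ k : ℤ, (∑' l : ℤ, Cf (k, l) * ee l φ) = 0 := by
      intro φ
      apply coeff_zero hr _ (K * T) (hrowb φ)
      intro θ
      rw [← hrows θ φ]
      exact hcon θ φ
    have h2 : ∀ k l : ℤ, Cf (k, l) = 0 := by
      intro k
      apply coeff_zero hr (fun l => Cf (k, l)) (K * Real.exp (-r * |k|))
      · intro l
        exact (hCb (k, l)).trans (le_of_eq (by ring))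
      · intro φ
        exact h1 φ k
    exact hC0 (h2 k₀ l₀)
  obtain ⟨θ₀, φ₀, hch⟩ := hex
  -- G ≡ 0 by density
  have hGzero : ∀ θ φ : ℝ, F c (θ + φ) - F a θ - F b φ = 0 := by
    have step1 : ∀ θ : ℝ, Chat θ φ₀ ≠ 0 → ∀ φ : ℝ, F c (θ + φ) - F a θ - F b φ = 0 := by
      intro θ hθ
      have hd : Dense {φ : ℝ | Chat θ φ ≠ 0} := by
        have h := dense_ne hr (fun l : ℤ => ∑' k : ℤ, Cf (k, l) * ee k θ) (K * T) (hcolb θ) φ₀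
          (by rw [← hcols θ φ₀]; exact hθ)
        have hset : {φ : ℝ | ∑' l : ℤ, (∑' k : ℤ, Cf (k, l) * ee k θ) * ee l φ ≠ 0}
            = {φ : ℝ | Chat θ φ ≠ 0} := by
          ext φ
          simp only [Set.mem_setOf_eq]
          rw [← hcols θ φ]
        rwa [hset] at h
      have hcontφ : Continuous (fun φ : ℝ => F c (θ + φ) - F a θ - F b φ) := by
        apply Continuous.sub
        apply Continuous.sub
        · exact (hFcont c).comp (continuous_const.add continuous_id)
        · exact continuous_const
        · exact hFcont b
      have heq := Continuous.ext_on hd hcontφ continuous_const (fun φ hφ => by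
        have hk := key θ φ
        rcases mul_eq_zero.mp hk with h | h
        · exact absurd h hφ
        · exact h)
      intro φ
      exact congrFun heq φ
    intro θ φ
    have hd : Dense {θ : ℝ | Chat θ φ₀ ≠ 0} := by
      have h := dense_ne hr (fun k : ℤ => ∑' l : ℤ, Cf (k, l) * ee l φ₀) (K * T) (hrowb φ₀) θ₀
        (by rw [← hrows θ₀ φ₀]; exact hch)
      have hset : {θ : ℝ | ∑' k : ℤ, (∑' l : ℤ, Cf (k, l) * ee l φ₀) * ee k θ ≠ 0}
          = {θ : ℝ | Chat θ φ₀ ≠ 0} := by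
        ext θ
        simp only [Set.mem_setOf_eq]
        rw [← hrows θ φ₀]
      rwa [hset] at h
    have hcontθ : Continuous (fun θ : ℝ => F c (θ + φ) - F a θ - F b φ) := by
      apply Continuous.sub
      apply Continuous.sub
      · exact (hFcont c).comp (continuous_id.add continuous_const)
      · exact hFcont a
      · exact continuous_const
    have heq := Continuous.ext_on hd hcontθ continuous_const (fun θ' hθ' => step1 θ' hθ' φ)
    exact congrFun heq θ
  -- Cauchy functional equation
  have hFac : ∀ θ : ℝ, F a θ = F c θ := by
    intro θ
    have := hGzero θ 0
    rw [add_zero, hF0 b] at this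
    linear_combination -this
  have hFbc : ∀ φ : ℝ, F b φ = F c φ := by
    intro φ
    have := hGzero 0 φ
    rw [zero_add, hF0 a] at this
    linear_combination -this
  have hadd : ∀ θ φ : ℝ, F c (θ + φ) = F c θ + F c φ := by
    intro θ φ
    have := hGzero θ φ
    rw [hFac θ, hFbc φ] at this
    linear_combination this
  have hper : ∀ θ : ℝ, F c (θ + 2 * π) = F c θ := by
    intro θ
    rw [hFdef]
    simp only
    exact tsum_congr (fun m => by rw [ee_periodic])
  have h2pi : F c (2 * π) = 0 := by
    have := hper 0
    rw [zero_add, hF0 c] at this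
    exact this
  have hnat : ∀ (n : ℕ) (x : ℝ), F c (n * x) = n * F c x := by
    intro n
    induction n with
    | zero => intro x; simp [hF0 c]
    | succ n ih =>
        intro x
        have : ((n : ℝ) + 1) * x = (n : ℝ) * x + x := by ring
        push_cast
        rw [this, hadd, ih]
        ring
  have hFcneg : ∀ x : ℝ, F c (-x) = -F c x := by
    intro x
    have := hadd x (-x)
    rw [add_neg_cancel, hF0 c] at this
    linear_combination -this
  have hint : ∀ (n : ℤ) (x : ℝ), F c (n * x) = n * F c x := by
    intro n x
    obtain ⟨k, rfl | rfl⟩ := Int.eq_nat_or_neg n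
    · push_cast
      exact hnat k x
    · push_cast
      rw [neg_mul, hFcneg, hnat]
      ring
  have hrat : ∀ q : ℚ, F c (2 * π * q) = 0 := by
    intro q
    have hdenR : (q.den : ℝ) ≠ 0 := Nat.cast_ne_zero.mpr q.pos.ne'
    have hqr : (q.den : ℝ) * (2 * π * q) = (q.num : ℝ) * (2 * π) := by
      rw [Rat.cast_def]
      field_simp
    have h1 := hnat q.den (2 * π * q)
    rw [hqr, hint q.num (2 * π), h2pi, mul_zero] at h1
    have hdenC : (q.den : ℂ) ≠ 0 := Nat.cast_ne_zero.mpr q.pos.ne'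
    rcases mul_eq_zero.mp h1.symm with h | h
    · exact absurd h hdenC
    · exact h
  have hdense : Dense (Set.range fun q : ℚ => 2 * π * (q : ℝ)) := by
    have hsurj : Function.Surjective (fun x : ℝ => 2 * π * x) := by
      intro y
      refine ⟨y / (2 * π), ?_⟩
      field_simp
    have hdr : DenseRange ((fun x : ℝ => 2 * π * x) ∘ ((↑) : ℚ → ℝ)) :=
      DenseRange.comp hsurj.denseRange Rat.denseRange_cast (by continuity)
    exact hdr
  have hFcfun : F c = fun _ : ℝ => (0 : ℂ) := by
    apply Continuous.ext_on hdense (hFcont c) continuous_const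
    rintro x ⟨q, rfl⟩
    exact hrat q
  have hFa : ∀ θ : ℝ, ∑' m : ℤ, D a m * ee m θ = 0 := by
    intro θ
    have h1 : F a θ = 0 := by
      rw [hFac θ, hFcfun]
    exact h1
  exact coeff_zero hr (D a) K (hDb a) hFa
end

section
/- Let D assign to each pair of flavor indices a, c ∈ ℤ a function D^{ac} : ℤ → ℂ (so that the operator coefficients are D^{ac}_{mn} = D^{ac}(m−n), translation invariant in the site indices). Suppose: (i) there exist K > 0 and r > 0 with |D^{ac}(m)| ≤ K·exp(−r|m|) for all a, c, m ∈ ℤ (uniform locality); (ii) Σ_{m∈ℤ} D^{ac}(m) = 0 for all a, c ∈ ℤ; (iii) the multi-flavor Leibniz rule holds with the matrix product rule C^{abc}_{lmn} = δ_{l−n,b}·δ_{n−m,a}·δ_{c,a+b}, i.e. for all a, b, c, l, m, n ∈ ℤ: Σ_{k∈ℤ} Σ_{d∈ℤ} C^{abd}_{lmk} D^{dc}(k−n) = Σ_{k∈ℤ} Σ_{d∈ℤ} C^{dbc}_{kmn} D^{ad}(l−k) + Σ_{k∈ℤ} Σ_{d∈ℤ} C^{adc}_{lkn} D^{bd}(m−k).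 Then there exists a function d̃ : ℤ → ℂ such that D^{ac}(m) = d̃(a−c)·(δ_{m,a−c} − δ_{m,c−a}) for all a, c, m ∈ ℤ. -/
/-- The matrix product-rule coefficients
`C^{abc}_{lmn} = δ_{l−n,b}·δ_{n−m,a}·δ_{c,a+b}` of Section 6. -/
noncomputable def Cmat (a b c l m n : ℤ) : ℂ :=
  (if l - n = b then 1 else 0) * (if n - m = a then 1 else 0) *
    (if c = a + b then 1 else 0)

lemma sum1 (D : ℤ → ℤ → ℤ → ℂ) (a b c l m n : ℤ) :
    ∑ᶠ p : ℤ × ℤ, Cmat a b p.2 l m p.1 * D p.2 c (p.1 - n) =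
      if l - m = a + b then D (a + b) c (l - b - n) else 0 := by
  rw [finsum_eq_single _ ((l - b, a + b) : ℤ × ℤ)]
  · simp only [Cmat]
    have h1 : l - (l - b) = b := by ring
    have h2 : (l - b - m = a) ↔ (l - m = a + b) := by omega
    simp [h1, h2]
  · intro x hx
    rcases eq_or_ne x.1 (l - b) with h1 | h1
    · rcases eq_or_ne x.2 (a + b) with h2 | h2
      · exact absurd (Prod.ext h1 h2) hx
      · simp [Cmat, h2]
    · have : l - x.1 ≠ b := by omega
      simp [Cmat, this]

lemma sum2 (D : ℤ → ℤ → ℤ → ℂ) (a b c l m n : ℤ) :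
    ∑ᶠ p : ℤ × ℤ, Cmat p.2 b c p.1 m n * D a p.2 (l - p.1) =
      if c = n - m + b then D a (n - m) (l - n - b) else 0 := by
  rw [finsum_eq_single _ ((n + b, n - m) : ℤ × ℤ)]
  · simp only [Cmat]
    have h1 : n + b - n = b := by ring
    have h2 : l - (n + b) = l - n - b := by ring
    have h3 : (c = n - m + b) ↔ (c = n - m + b) := Iff.rfl
    simp [h1, h2]
  · intro x hx
    rcases eq_or_ne x.1 (n + b) with h1 | h1
    · rcases eq_or_ne x.2 (n - m) with h2 | h2
      · exact absurd (Prod.ext h1 h2) hx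
      · have : n - m ≠ x.2 := fun h => h2 h.symm
        simp [Cmat, this]
    · have : x.1 - n ≠ b := by omega
      simp [Cmat, this]

lemma sum3 (D : ℤ → ℤ → ℤ → ℂ) (a b c l m n : ℤ) :
    ∑ᶠ p : ℤ × ℤ, Cmat a p.2 c l p.1 n * D b p.2 (m - p.1) =
      if c = a + (l - n) then D b (l - n) (m - n + a) else 0 := by
  rw [finsum_eq_single _ ((n - a, l - n) : ℤ × ℤ)]
  · simp only [Cmat]
    have h1 : n - (n - a) = a := by ring
    have h2 : m - (n - a) = m - n + a := by ring
    simp [h1, h2]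
  · intro x hx
    rcases eq_or_ne x.1 (n - a) with h1 | h1
    · rcases eq_or_ne x.2 (l - n) with h2 | h2
      · exact absurd (Prod.ext h1 h2) hx
      · have : l - n ≠ x.2 := fun h => h2 h.symm
        simp [Cmat, this]
    · have : n - x.1 ≠ a := by omega
      simp [Cmat, this]

/-- Every uniformly local, translation-invariant difference
operator `D^{ac}(m)` annihilating constants that satisfies the multi-flavor
Leibniz rule with the matrix product rule must be of commutator form:
`D^{ac}(m) = d̃(a−c)·(δ_{m,a−c} − δ_{m,c−a})` for some `d̃ : ℤ → ℂ`. -/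
theorem stmt_17 (D : ℤ → ℤ → ℤ → ℂ)
    (hloc : ∃ K r : ℝ, 0 < K ∧ 0 < r ∧
      ∀ a c m : ℤ, ‖D a c m‖ ≤ K * Real.exp (-r * (|m| : ℝ)))
    (hzero : ∀ a c : ℤ, ∑' m : ℤ, D a c m = 0)
    (hleib : ∀ a b c l m n : ℤ,
      ∑ᶠ p : ℤ × ℤ, Cmat a b p.2 l m p.1 * D p.2 c (p.1 - n) =
        (∑ᶠ p : ℤ × ℤ, Cmat p.2 b c p.1 m n * D a p.2 (l - p.1)) +
          ∑ᶠ p : ℤ × ℤ, Cmat a p.2 c l p.1 n * D b p.2 (m - p.1)) :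
    ∃ dt : ℤ → ℂ, ∀ a c m : ℤ, D a c m =
      dt (a - c) * ((if m = a - c then 1 else 0) - (if m = c - a then 1 else 0)) := by
  have key : ∀ a b c l m n : ℤ,
      (if l - m = a + b then D (a + b) c (l - b - n) else 0) =
        (if c = n - m + b then D a (n - m) (l - n - b) else 0) +
          (if c = a + (l - n) then D b (l - n) (m - n + a) else 0) := by
    intro a b c l m n
    have h := hleib a b c l m n
    rwa [sum1, sum2, sum3] at h
  -- Step 1: D vanishes off m = ±(a - c)
  have hvan : ∀ A c M : ℤ, M ≠ c - A → M ≠ A - c → D A c M = 0 := by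
    intro A c M h1 h2
    have h := key A 0 c M (M - A) 0
    rw [if_pos (by omega), if_neg (by omega), if_neg (by omega)] at h
    simpa using h
  -- Step 2: diagonal vanishes
  have hdiag : ∀ a : ℤ, D a a 0 = 0 := by
    intro a
    have h := hzero a a
    rwa [tsum_eq_single 0 (fun m hm => hvan a a m (by omega) (by omega))] at h
  -- Step 3: antisymmetry
  have hanti : ∀ a c : ℤ, a ≠ c → D a c (c - a) = -D a c (a - c) := by
    intro a c hne
    have h := hzero a c
    rw [tsum_eq_sum (s := ({a - c, c - a} : Finset ℤ))
      (fun m hm => by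
        simp only [Finset.mem_insert, Finset.mem_singleton, not_or] at hm
        exact hvan a c m hm.2 hm.1)] at h
    rw [Finset.sum_pair (by omega : a - c ≠ c - a)] at h
    linear_combination h
  -- Step 4: shift invariance
  have hshift : ∀ a b c : ℤ, c ≠ a + b →
      D (a + b) c (a + b - c) = D a (c - b) (a + b - c) := by
    intro a b c hne
    have h := key a b c (a + 2 * b - c) (b - c) 0
    rw [if_pos (by omega), if_pos (by omega), if_neg (by omega)] at h
    have e1 : a + 2 * b - c - b - 0 = a + b - c := by ring
    have e2 : (0 : ℤ) - (b - c) = c - b := by ring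
    have e3 : a + 2 * b - c - 0 - b = a + b - c := by ring
    rw [e1, e2, e3, add_zero] at h
    exact h
  -- Step 5: only flavor difference matters
  have hdep : ∀ a c : ℤ, a ≠ c → D a c (a - c) = D (a - c) 0 (a - c) := by
    intro a c hne
    have h := hshift (a - c) c c (by omega)
    have e1 : a - c + c = a := by ring
    have e2 : c - c = (0 : ℤ) := by ring
    rw [e1, e2] at h
    exact h
  refine ⟨fun k => D k 0 k, fun a c m => ?_⟩
  rcases eq_or_ne a c with rfl | hne
  · have : a - a = (0 : ℤ) := by ring
    rw [this]
    rcases eq_or_ne m 0 with rfl | hm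
    · simp [hdiag a]
    · simp [hm, hvan a a m (by omega) (by omega)]
  · have hkey : D a c (a - c) = D (a - c) 0 (a - c) := hdep a c hne
    rcases eq_or_ne m (a - c) with rfl | hm1
    · rw [if_pos rfl, if_neg (by omega)]
      rw [hkey]; ring
    · rcases eq_or_ne m (c - a) with rfl | hm2
      · rw [if_neg (by omega), if_pos rfl]
        rw [hanti a c hne, hkey]; ring
      · rw [if_neg hm1, if_neg hm2, hvan a c m hm2 hm1]; ring
end
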